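/- arXiv:2010.05088 — 2 statements merged into one kernel-verified Lean document; each statement's English description precedes it below -/
import Mathlib

section
/- For every ε > 0, m ≥ 0, and every finite set T ⊂ εℤ² such that every infinite checker path starting from (0,0) with first step to (ε,ε) passes through some point of T, we have Σ_{(x,t)∈T} P(x,t bypass T∖{(x,t)}; m,ε) = 1. -/
/-!
Split the amplitude of the paths that arrive at time `n` without having met `T` according to
their last move. Since the parity of the number of turns is determined by the last move, the
right-moving part is real and the left-moving part is purely imaginary, so the squared norm of
the total amplitude is the sum of the squared norms of the two parts. One step of the
recursion `a' = a + v b`, `b' = v a + b` with `v = -imε` multiplies the total mass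
`Σₓ (|a|² + |b|²)` by `1 + m²ε²`, which the normalisation `(1 + m²ε²)^((1-n)/2)` undoes. At each
time, the mass arriving at points of `T` is exactly the bypass probability of those points and
is removed from the evolution. Since every path meets `T`, nothing survives beyond the last
time of `T`, so the bypass probabilities add up to the initial mass `1`.
-/

open scoped Classical

noncomputable section

/-- The `i`-th move of a checker path encoded as `f : Fin n → Bool`
(`true` = upwards-right move `(ε,ε)`, `false` = upwards-left move `(−ε,ε)`);
out-of-range indices default to `true`. -/
def fcStep {n : ℕ} (f : Fin n → Bool) (i : ℕ) : Bool :=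
  if h : i < n then f ⟨i, h⟩ else true

/-- The number of turns of the checker path `f`. -/
def fcTurns {n : ℕ} (f : Fin n → Bool) : ℕ :=
  ((Finset.range (n - 1)).filter fun i => fcStep f i ≠ fcStep f (i + 1)).card

/-- The position (in units of `ε`) of the checker path `f` after `i` moves,
starting from the origin. -/
def fcPos {n : ℕ} (f : Fin n → Bool) (i : ℕ) : ℤ :=
  ∑ j ∈ Finset.range i, (if fcStep f j then (1 : ℤ) else -1)

/-- Checker paths from `(0,0)` to `(εx, εn)` whose first step is to `(ε,ε)`. -/
def fcPaths (n : ℕ) (x : ℤ) : Finset (Fin n → Bool) :=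
  Finset.univ.filter fun f =>
    (∀ i : Fin n, (i : ℕ) = 0 → f i = true) ∧ fcPos f n = x

/-- The amplitude `a(εx, εn, m, ε)`. -/
def fcAmp (m ε : ℝ) (x : ℤ) (n : ℕ) : ℂ :=
  (((1 + m ^ 2 * ε ^ 2) ^ ((1 - (n : ℝ)) / 2) : ℝ) : ℂ) * Complex.I *
    ∑ f ∈ fcPaths n x, (-Complex.I * (m * ε)) ^ fcTurns f

/-- The probability `P(εx, εn, m, ε)` to find the electron at `(εx, εn)`. -/
def fcP (m ε : ℝ) (x : ℤ) (n : ℕ) : ℝ := ‖fcAmp m ε x n‖ ^ 2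

/-- The amplitude `a(εx, εn bypass T; m, ε)`: as `fcAmp`, but the sum is only over
checker paths avoiding every point of the set `T ⊂ εℤ²` (a point `(X, k)` encodes
the lattice point `(εX, εk)`). -/
def fcAmpBypass (m ε : ℝ) (T : Set (ℤ × ℤ)) (x : ℤ) (n : ℕ) : ℂ :=
  (((1 + m ^ 2 * ε ^ 2) ^ ((1 - (n : ℝ)) / 2) : ℝ) : ℂ) * Complex.I *
    ∑ f ∈ (fcPaths n x).filter (fun f => ∀ i ≤ n, (fcPos f i, (i : ℤ)) ∉ T),
      (-Complex.I * (m * ε)) ^ fcTurns f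

/-- The position (in units of `ε`) of an infinite checker path `g : ℕ → Bool`
(`true` = move `(ε,ε)`, `false` = move `(−ε,ε)`) after `i` moves. -/
def fcPosInf (g : ℕ → Bool) (i : ℕ) : ℤ :=
  ∑ j ∈ Finset.range i, (if g j then (1 : ℤ) else -1)

namespace Checker

open Finset

variable {n : ℕ}

lemma mem_fcPaths {x : ℤ} {f : Fin n → Bool} :
    f ∈ fcPaths n x ↔ fcStep f 0 = true ∧ fcPos f n = x := by
  simp only [fcPaths, mem_filter, mem_univ, true_and]
  refine and_congr_left' ?_
  unfold fcStep
  split_ifs with hn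
  · exact ⟨fun h => h _ rfl, fun h i hi => by rwa [show i = ⟨0, hn⟩ from Fin.ext hi]⟩
  · exact iff_of_true (fun i hi => absurd (hi ▸ i.2) hn) rfl

lemma fcStep_snoc_of_lt (g : Fin n → Bool) (b : Bool) {i : ℕ} (hi : i < n) :
    fcStep (Fin.snoc g b : Fin (n + 1) → Bool) i = fcStep g i := by
  simp only [fcStep, dif_pos hi, dif_pos (Nat.lt_succ_of_lt hi)]
  exact Fin.snoc_castSucc (α := fun _ => Bool) b g ⟨i, hi⟩

lemma fcStep_snoc_self (g : Fin n → Bool) (b : Bool) :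
    fcStep (Fin.snoc g b : Fin (n + 1) → Bool) n = b := by
  simp only [fcStep, dif_pos n.lt_succ_self]
  exact Fin.snoc_last (α := fun _ => Bool) b g

lemma snoc_init_eq_self {f : Fin (n + 1) → Bool} {b : Bool} (hb : fcStep f n = b) :
    Fin.snoc (Fin.init f) b = f := by
  rw [← hb, fcStep, dif_pos n.lt_succ_self]
  exact Fin.snoc_init_self f

lemma fcPos_snoc_of_lt (g : Fin n → Bool) (b : Bool) {i : ℕ} (hi : i < n + 1) :
    fcPos (Fin.snoc g b : Fin (n + 1) → Bool) i = fcPos g i :=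
  sum_congr rfl fun j hj => by
    rw [fcStep_snoc_of_lt g b (by have := mem_range.mp hj; omega)]

lemma fcPos_snoc_succ (g : Fin n → Bool) (b : Bool) :
    fcPos (Fin.snoc g b : Fin (n + 1) → Bool) (n + 1) = fcPos g n + if b then 1 else -1 := by
  rw [fcPos, sum_range_succ, ← fcPos, fcPos_snoc_of_lt g b n.lt_succ_self, fcStep_snoc_self]

lemma abs_fcPos_le (f : Fin n → Bool) (i : ℕ) : |fcPos f i| ≤ i :=
  calc |fcPos f i| ≤ ∑ j ∈ range i, |if fcStep f j then (1 : ℤ) else -1| := abs_sum_le_sum_abs _ _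
    _ = i := by simp [apply_ite]

lemma fcTurns_eq_sum (f : Fin n → Bool) :
    fcTurns f = ∑ i ∈ range (n - 1), if fcStep f i ≠ fcStep f (i + 1) then 1 else 0 :=
  card_filter _ _

lemma fcTurns_snoc (hn : 1 ≤ n) (g : Fin n → Bool) (b : Bool) :
    fcTurns (Fin.snoc g b : Fin (n + 1) → Bool) =
      fcTurns g + if fcStep g (n - 1) = b then 0 else 1 := by
  obtain ⟨k, rfl⟩ : ∃ k, n = k + 1 := ⟨n - 1, by omega⟩
  rw [fcTurns_eq_sum, fcTurns_eq_sum, Nat.add_sub_cancel, Nat.add_sub_cancel, sum_range_succ,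
    fcStep_snoc_of_lt g b k.lt_succ_self, fcStep_snoc_self]
  congr 1
  · exact sum_congr rfl fun i hi => by
      have := mem_range.mp hi
      rw [fcStep_snoc_of_lt g b (by omega), fcStep_snoc_of_lt g b (by omega)]
  · simp only [ne_eq, ite_not]

lemma even_sum_range_ne_succ_iff (h : ℕ → Bool) (k : ℕ) :
    Even (∑ i ∈ range k, if h i ≠ h (i + 1) then 1 else 0) ↔ h 0 = h k := by
  induction k with
  | zero => simp
  | succ k ih =>
    rw [sum_range_succ, Nat.even_add, ih]
    cases h 0 <;> cases h k <;> cases h (k + 1) <;> simp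

lemma even_fcTurns_iff (f : Fin n → Bool) : Even (fcTurns f) ↔ fcStep f 0 = fcStep f (n - 1) := by
  rw [fcTurns_eq_sum, even_sum_range_ne_succ_iff]

/-- With `k = n` these are the paths arriving at time `n`, possibly at a point of `T`;
with `k = n + 1`, those that also survive time `n`. -/
def avoidingPaths (T : Finset (ℤ × ℤ)) (n : ℕ) (x : ℤ) (b : Bool) (k : ℕ) :
    Finset (Fin n → Bool) :=
  (fcPaths n x).filter fun f => (∀ i < k, (fcPos f i, (i : ℤ)) ∉ T) ∧ fcStep f (n - 1) = b

def pathAmp (v : ℂ) (T : Finset (ℤ × ℤ)) (n : ℕ) (x : ℤ) (b : Bool) (k : ℕ) : ℂ :=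
  ∑ f ∈ avoidingPaths T n x b k, v ^ fcTurns f

variable {T : Finset (ℤ × ℤ)} {x : ℤ} {b : Bool} {k : ℕ}

lemma mem_avoidingPaths {f : Fin n → Bool} :
    f ∈ avoidingPaths T n x b k ↔ fcStep f 0 = true ∧ fcPos f n = x ∧
      (∀ i < k, (fcPos f i, (i : ℤ)) ∉ T) ∧ fcStep f (n - 1) = b := by
  rw [avoidingPaths, mem_filter, mem_fcPaths, and_assoc]

lemma snoc_mem_avoidingPaths_iff (hn : 1 ≤ n) (g : Fin n → Bool) (c : Bool) :
    Fin.snoc g b ∈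
        (avoidingPaths T (n + 1) x b (n + 1)).filter (fun f => fcStep f (n - 1) = c) ↔
      g ∈ avoidingPaths T n (x - if b then 1 else -1) c (n + 1) := by
  have hpos : ∀ i < n + 1, fcPos (Fin.snoc g b : Fin (n + 1) → Bool) i = fcPos g i :=
    fun i hi => fcPos_snoc_of_lt g b hi
  simp only [mem_filter, mem_avoidingPaths, fcStep_snoc_of_lt g b hn,
    fcStep_snoc_of_lt g b (n.sub_lt hn one_pos), Nat.add_sub_cancel, fcStep_snoc_self,
    fcPos_snoc_succ, eq_sub_iff_add_eq, and_true]
  constructor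
  · rintro ⟨⟨h0, hx, hT⟩, hc⟩
    exact ⟨h0, hx, fun i hi => hpos i hi ▸ hT i hi, hc⟩
  · rintro ⟨h0, hx, hT, hc⟩
    exact ⟨⟨h0, hx, fun i hi => (hpos i hi).symm ▸ hT i hi⟩, hc⟩

lemma sum_filter_avoidingPaths_succ (v : ℂ) (hn : 1 ≤ n) (c : Bool) :
    ∑ f ∈ (avoidingPaths T (n + 1) x b (n + 1)).filter (fun f => fcStep f (n - 1) = c),
        v ^ fcTurns f =
      v ^ (if c = b then 0 else 1) * pathAmp v T n (x - if b then 1 else -1) c (n + 1) := by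
  have hsnoc : ∀ f ∈ (avoidingPaths T (n + 1) x b (n + 1)).filter
      (fun f => fcStep f (n - 1) = c), Fin.snoc (Fin.init f) b = f := fun f hf =>
    snoc_init_eq_self (mem_avoidingPaths.mp (mem_filter.mp hf).1).2.2.2
  rw [pathAmp, mul_sum]
  refine sum_nbij' Fin.init (Fin.snoc · b) (fun f hf => ?_) (fun g hg => ?_) hsnoc
    (fun g _ => Fin.init_snoc (α := fun _ => Bool) b g) (fun f hf => ?_)
  · exact (snoc_mem_avoidingPaths_iff hn _ c).mp (by rwa [hsnoc f hf])
  · exact (snoc_mem_avoidingPaths_iff hn g c).mpr hg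
  · have hc := (mem_filter.mp hf).2
    rw [← hsnoc f hf, fcStep_snoc_of_lt _ _ (n.sub_lt hn one_pos)] at hc
    rw [← hsnoc f hf, fcTurns_snoc hn, Fin.init_snoc, hc, pow_add, mul_comm]

lemma pathAmp_succ (v : ℂ) (hn : 1 ≤ n) :
    pathAmp v T (n + 1) x b (n + 1) =
      ∑ c : Bool,
        v ^ (if c = b then 0 else 1) * pathAmp v T n (x - if b then 1 else -1) c (n + 1) := by
  rw [pathAmp, ← sum_fiberwise _ (fun f => fcStep f (n - 1))]
  exact Fintype.sum_congr _ _ fun c => sum_filter_avoidingPaths_succ v hn c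

lemma pathAmp_succ_true (v : ℂ) (hn : 1 ≤ n) :
    pathAmp v T (n + 1) x true (n + 1) =
      pathAmp v T n (x - 1) true (n + 1) + v * pathAmp v T n (x - 1) false (n + 1) := by
  simp [pathAmp_succ v hn]

lemma pathAmp_succ_false (v : ℂ) (hn : 1 ≤ n) :
    pathAmp v T (n + 1) x false (n + 1) =
      v * pathAmp v T n (x + 1) true (n + 1) + pathAmp v T n (x + 1) false (n + 1) := by
  simp [pathAmp_succ v hn]

lemma avoidingPaths_succ_self :
    avoidingPaths T n x b (n + 1) = if (x, (n : ℤ)) ∈ T then ∅ else avoidingPaths T n x b n := by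
  ext f
  split_ifs with h
  · simp only [mem_avoidingPaths, notMem_empty, iff_false]
    rintro ⟨-, rfl, hT, -⟩
    exact hT n n.lt_succ_self h
  · simp only [mem_avoidingPaths, Nat.forall_lt_succ_right]
    constructor
    · rintro ⟨h0, hx, ⟨hT, -⟩, hb⟩
      exact ⟨h0, hx, hT, hb⟩
    · rintro ⟨h0, rfl, hT, hb⟩
      exact ⟨h0, rfl, ⟨hT, h⟩, hb⟩

lemma pathAmp_succ_self (v : ℂ) :
    pathAmp v T n x b (n + 1) = if (x, (n : ℤ)) ∈ T then 0 else pathAmp v T n x b n := by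
  rw [pathAmp, avoidingPaths_succ_self]
  split_ifs <;> simp [pathAmp]

lemma pathAmp_eq_zero_of_lt_abs (v : ℂ) (hx : (n : ℤ) < |x|) : pathAmp v T n x b k = 0 :=
  sum_eq_zero fun f hf => absurd (abs_fcPos_le f n) <| by
    rw [(mem_avoidingPaths.mp hf).2.1]; exact not_le.mpr hx

lemma pathAmp_one (v : ℂ) (h0 : ((0 : ℤ), (0 : ℤ)) ∉ T) :
    pathAmp v T 1 x b 1 = if x = 1 ∧ b = true then 1 else 0 := by
  rw [pathAmp, avoidingPaths, fcPaths, filter_filter, sum_filter,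
    ← (Equiv.funUnique (Fin 1) Bool).symm.sum_comp, Fintype.sum_bool]
  rcases eq_or_ne x 1 with rfl | hx
  · cases b <;> simp [fcPos, fcStep, fcTurns, h0]
  · cases b <;> simp [fcPos, fcStep, hx, hx.symm]

lemma sq_eq_ofReal_of_re_eq_zero {v : ℂ} (hv : v.re = 0) : v ^ 2 = ((-v.im ^ 2 : ℝ) : ℂ) := by
  apply Complex.ext <;> simp [sq, hv]

lemma im_pow_eq_zero_of_even {v : ℂ} (hv : v.re = 0) {j : ℕ} (hj : Even j) : (v ^ j).im = 0 := by
  obtain ⟨i, rfl⟩ := hj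
  rw [← two_mul, pow_mul, sq_eq_ofReal_of_re_eq_zero hv, ← Complex.ofReal_pow, Complex.ofReal_im]

lemma re_pow_eq_zero_of_odd {v : ℂ} (hv : v.re = 0) {j : ℕ} (hj : Odd j) : (v ^ j).re = 0 := by
  obtain ⟨i, rfl⟩ := hj
  rw [pow_succ, pow_mul, sq_eq_ofReal_of_re_eq_zero hv, ← Complex.ofReal_pow,
    Complex.re_ofReal_mul, hv, mul_zero]

lemma even_fcTurns_iff_of_mem {f : Fin n → Bool} (hf : f ∈ avoidingPaths T n x b k) :
    Even (fcTurns f) ↔ b = true := by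
  obtain ⟨h0, -, -, hb⟩ := mem_avoidingPaths.mp hf
  rw [even_fcTurns_iff, h0, hb, eq_comm]

lemma im_pathAmp_true {v : ℂ} (hv : v.re = 0) : (pathAmp v T n x true k).im = 0 := by
  rw [pathAmp, Complex.im_sum]
  exact sum_eq_zero fun f hf => im_pow_eq_zero_of_even hv ((even_fcTurns_iff_of_mem hf).mpr rfl)

lemma re_pathAmp_false {v : ℂ} (hv : v.re = 0) : (pathAmp v T n x false k).re = 0 := by
  rw [pathAmp, Complex.re_sum]
  refine sum_eq_zero fun f hf => re_pow_eq_zero_of_odd hv ?_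
  rw [← Nat.not_even_iff_odd, even_fcTurns_iff_of_mem hf]
  exact Bool.false_ne_true

lemma norm_add_sq_of_im_eq_zero_of_re_eq_zero {A B : ℂ} (hA : A.im = 0) (hB : B.re = 0) :
    ‖A + B‖ ^ 2 = ‖A‖ ^ 2 + ‖B‖ ^ 2 := by
  simp only [Complex.sq_norm, Complex.normSq_apply, Complex.add_re, Complex.add_im, hA, hB]
  ring

lemma norm_add_mul_sq_add_norm_mul_add_sq {v : ℂ} (hv : v.re = 0) (A B : ℂ) :
    ‖A + v * B‖ ^ 2 + ‖v * A + B‖ ^ 2 = (1 + ‖v‖ ^ 2) * (‖A‖ ^ 2 + ‖B‖ ^ 2) := by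
  simp only [Complex.sq_norm, Complex.normSq_apply, Complex.add_re, Complex.add_im,
    Complex.mul_re, Complex.mul_im, hv]
  ring

lemma hasFiniteSupport_of_eq_zero_of_lt_abs {M : Type*} [Zero M] {g : ℤ → M} (n : ℕ)
    (h : ∀ x, (n : ℤ) < |x| → g x = 0) : g.HasFiniteSupport :=
  (Set.finite_Icc (-(n : ℤ)) n).subset fun x hx => by
    rw [Set.mem_Icc, ← abs_le]
    exact not_lt.mp fun hlt => hx (h x hlt)

lemma sum_filter_snd_eq_finsum {M : Type*} [AddCommMonoid M] (T : Finset (ℤ × ℤ)) (k : ℤ)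
    (g : ℤ → M) :
    ∑ p ∈ T.filter (fun p => p.2 = k), g p.1 = ∑ᶠ x, if (x, k) ∈ T then g x else 0 := by
  rw [finsum_eq_sum_of_support_subset _ (s := (T.filter (fun p => p.2 = k)).image Prod.fst),
    sum_image]
  · refine sum_congr rfl fun p hp => ?_
    obtain ⟨hpT, rfl⟩ := mem_filter.mp hp
    rw [if_pos hpT]
  · intro p hp q hq h
    exact Prod.ext h ((mem_filter.mp hp).2.trans (mem_filter.mp hq).2.symm)
  · intro x hx
    have hxT : (x, k) ∈ T := by_contra fun h => hx (if_neg h)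
    exact mem_image.mpr ⟨(x, k), mem_filter.mpr ⟨hxT, rfl⟩, rfl⟩

def pathMass (v : ℂ) (T : Finset (ℤ × ℤ)) (n : ℕ) (x : ℤ) (k : ℕ) : ℝ :=
  ‖pathAmp v T n x true k‖ ^ 2 + ‖pathAmp v T n x false k‖ ^ 2

variable {v : ℂ}

lemma hasFiniteSupport_pathMass : (fun x => pathMass v T n x k).HasFiniteSupport :=
  hasFiniteSupport_of_eq_zero_of_lt_abs n fun x hx => by
    simp [pathMass, pathAmp_eq_zero_of_lt_abs v hx]

lemma pathMass_succ (hv : v.re = 0) (hn : 1 ≤ n) (x : ℤ) :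
    (1 + ‖v‖ ^ 2) * pathMass v T n x (n + 1) =
      ‖pathAmp v T (n + 1) (x + 1) true (n + 1)‖ ^ 2 +
        ‖pathAmp v T (n + 1) (x - 1) false (n + 1)‖ ^ 2 := by
  rw [pathAmp_succ_true v hn, pathAmp_succ_false v hn, add_sub_cancel_right, sub_add_cancel,
    norm_add_mul_sq_add_norm_mul_add_sq hv, pathMass]

lemma finsum_pathMass_succ (hv : v.re = 0) (hn : 1 ≤ n) :
    ∑ᶠ x, pathMass v T (n + 1) x (n + 1) = (1 + ‖v‖ ^ 2) * ∑ᶠ x, pathMass v T n x (n + 1) := by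
  have hfin : ∀ b, (fun x => ‖pathAmp v T (n + 1) x b (n + 1)‖ ^ 2).HasFiniteSupport := fun b =>
    hasFiniteSupport_of_eq_zero_of_lt_abs (n + 1) fun x hx => by
      simp [pathAmp_eq_zero_of_lt_abs v hx]
  calc ∑ᶠ x, pathMass v T (n + 1) x (n + 1)
      = ∑ᶠ x, ‖pathAmp v T (n + 1) x true (n + 1)‖ ^ 2 +
          ∑ᶠ x, ‖pathAmp v T (n + 1) x false (n + 1)‖ ^ 2 :=
        finsum_add_distrib (hfin true) (hfin false)
    _ = ∑ᶠ x, ‖pathAmp v T (n + 1) (x + 1) true (n + 1)‖ ^ 2 +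
          ∑ᶠ x, ‖pathAmp v T (n + 1) (x - 1) false (n + 1)‖ ^ 2 :=
        congr_arg₂ (· + ·)
          (finsum_comp_equiv (Equiv.addRight 1)
            (f := fun x => ‖pathAmp v T (n + 1) x true (n + 1)‖ ^ 2)).symm
          (finsum_comp_equiv (Equiv.subRight 1)
            (f := fun x => ‖pathAmp v T (n + 1) x false (n + 1)‖ ^ 2)).symm
    _ = ∑ᶠ x, (1 + ‖v‖ ^ 2) * pathMass v T n x (n + 1) :=
        (finsum_add_distrib ((hfin true).comp_of_injective (add_left_injective 1))
          ((hfin false).comp_of_injective (sub_left_injective (b := 1)))).symm.trans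
          (finsum_congr fun x => (pathMass_succ hv hn x).symm)
    _ = (1 + ‖v‖ ^ 2) * ∑ᶠ x, pathMass v T n x (n + 1) := (mul_finsum _ _).symm

lemma finsum_pathMass_succ_self :
    ∑ᶠ x, pathMass v T n x (n + 1) =
      ∑ᶠ x, pathMass v T n x n -
        ∑ p ∈ T.filter (fun p => p.2 = (n : ℤ)), pathMass v T n p.1 n := by
  have hfin : (fun x => if (x, (n : ℤ)) ∈ T then pathMass v T n x n else 0).HasFiniteSupport :=
    hasFiniteSupport_of_eq_zero_of_lt_abs n fun x hx => by
      simp [pathMass, pathAmp_eq_zero_of_lt_abs v hx]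
  rw [sum_filter_snd_eq_finsum T n fun x => pathMass v T n x n,
    ← finsum_sub_distrib hasFiniteSupport_pathMass hfin]
  refine finsum_congr fun x => ?_
  simp only [pathMass, pathAmp_succ_self]
  split_ifs <;> simp

lemma finsum_pathMass_one (h0 : ((0 : ℤ), (0 : ℤ)) ∉ T) : ∑ᶠ x, pathMass v T 1 x 1 = 1 := by
  rw [finsum_eq_single _ 1 fun x hx => by simp [pathMass, pathAmp_one v h0, hx]]
  simp [pathMass, pathAmp_one v h0]

lemma avoids_erase_iff {p : ℤ × ℤ} (hp : p.2 = (n : ℤ)) {f : Fin n → Bool}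
    (hf : fcPos f n = p.1) :
    (∀ i ≤ n, (fcPos f i, (i : ℤ)) ∉ (↑(T.erase p) : Set (ℤ × ℤ))) ↔
      ∀ i < n, (fcPos f i, (i : ℤ)) ∉ T := by
  simp only [coe_erase, Set.mem_sdiff, mem_coe, Set.mem_singleton_iff, not_and, not_not]
  constructor
  · intro h i hi hiT
    exact hi.ne (Nat.cast_injective ((congrArg Prod.snd (h i hi.le hiT)).trans hp))
  · intro h i hi hiT
    rcases hi.lt_or_eq with hlt | rfl
    · exact absurd hiT (h i hlt)
    · exact Prod.ext hf hp.symm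

lemma fcAmpBypass_erase_eq (m ε : ℝ) {p : ℤ × ℤ} (hp : p.2 = (n : ℤ)) :
    fcAmpBypass m ε ↑(T.erase p) p.1 n =
      (((1 + m ^ 2 * ε ^ 2) ^ ((1 - (n : ℝ)) / 2) : ℝ) : ℂ) * Complex.I *
        (pathAmp (-Complex.I * (m * ε)) T n p.1 true n +
          pathAmp (-Complex.I * (m * ε)) T n p.1 false n) := by
  have hdisj : Disjoint (avoidingPaths T n p.1 true n) (avoidingPaths T n p.1 false n) :=
    disjoint_left.mpr fun f h1 h2 => by
      simpa using (mem_avoidingPaths.mp h1).2.2.2.symm.trans (mem_avoidingPaths.mp h2).2.2.2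
  rw [fcAmpBypass, pathAmp, pathAmp, ← sum_union hdisj]
  refine congrArg _ (sum_congr (ext fun f => ?_) fun _ _ => rfl)
  simp only [mem_filter, mem_union, mem_avoidingPaths, mem_fcPaths]
  constructor
  · rintro ⟨⟨h0, hx⟩, havoid⟩
    rw [avoids_erase_iff hp hx] at havoid
    cases fcStep f (n - 1)
    · exact .inr ⟨h0, hx, havoid, rfl⟩
    · exact .inl ⟨h0, hx, havoid, rfl⟩
  · rintro (⟨h0, hx, havoid, -⟩ | ⟨h0, hx, havoid, -⟩) <;>
      exact ⟨⟨h0, hx⟩, (avoids_erase_iff hp hx).mpr havoid⟩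

lemma norm_fcAmpBypass_erase_sq (m ε : ℝ) {p : ℤ × ℤ} (hp : p.2 = (n : ℤ)) :
    ‖fcAmpBypass m ε ↑(T.erase p) p.1 n‖ ^ 2 =
      (1 + m ^ 2 * ε ^ 2) ^ (1 - (n : ℝ)) * pathMass (-Complex.I * (m * ε)) T n p.1 n := by
  have hv : (-Complex.I * (m * ε)).re = 0 := by simp
  rw [fcAmpBypass_erase_eq m ε hp, norm_mul, norm_mul, Complex.norm_I, mul_one, mul_pow,
    norm_add_sq_of_im_eq_zero_of_re_eq_zero (im_pathAmp_true hv) (re_pathAmp_false hv),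
    Complex.norm_real, Real.norm_of_nonneg (by positivity), ← Real.rpow_natCast,
    ← Real.rpow_mul (by positivity)]
  norm_num [pathMass]

lemma sum_filter_snd_norm_fcAmpBypass_sq (m ε : ℝ) :
    ∑ p ∈ T.filter (fun p => p.2 = (n : ℤ)), ‖fcAmpBypass m ε ↑(T.erase p) p.1 p.2.toNat‖ ^ 2 =
      (1 + m ^ 2 * ε ^ 2) ^ (1 - (n : ℝ)) *
        ∑ p ∈ T.filter (fun p => p.2 = (n : ℤ)), pathMass (-Complex.I * (m * ε)) T n p.1 n := by
  rw [mul_sum]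
  refine sum_congr rfl fun p hp => ?_
  have hp2 := (mem_filter.mp hp).2
  rw [hp2, Int.toNat_natCast, norm_fcAmpBypass_erase_sq m ε hp2]

lemma sum_filter_snd_lt_succ {M : Type*} [AddCommMonoid M] (T : Finset (ℤ × ℤ)) (n : ℤ)
    (g : ℤ × ℤ → M) :
    ∑ p ∈ T.filter (fun p => p.2 < n + 1), g p =
      ∑ p ∈ T.filter (fun p => p.2 < n), g p + ∑ p ∈ T.filter (fun p => p.2 = n), g p := by
  rw [← sum_union (disjoint_filter.mpr fun _ _ h1 h2 => by omega)]
  congr 1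
  ext p
  simp only [mem_filter, mem_union, ← and_or_left]
  exact and_congr_right fun _ => by omega

lemma sum_norm_fcAmpBypass_sq_add_finsum_pathMass (m ε : ℝ) (hposT : ∀ p ∈ T, 0 < p.2) (hn : 1 ≤ n) :
    ∑ p ∈ T.filter (fun p => p.2 < (n : ℤ)), ‖fcAmpBypass m ε ↑(T.erase p) p.1 p.2.toNat‖ ^ 2 +
      (1 + m ^ 2 * ε ^ 2) ^ (1 - (n : ℝ)) *
        ∑ᶠ x, pathMass (-Complex.I * (m * ε)) T n x n = 1 := by
  have hv : (-Complex.I * (m * ε)).re = 0 := by simp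
  have hK : 1 + ‖-Complex.I * (m * ε)‖ ^ 2 = 1 + m ^ 2 * ε ^ 2 := by simp [mul_pow]
  induction n, hn using Nat.le_induction with
  | base =>
    have h0 : ((0 : ℤ), (0 : ℤ)) ∉ T := fun h => (hposT _ h).false
    rw [filter_false_of_mem fun p hp => by have := hposT p hp; push_cast; omega]
    simp [finsum_pathMass_one h0]
  | succ n hn ih =>
    have hexp : (1 + m ^ 2 * ε ^ 2) ^ (1 - ((n + 1 : ℕ) : ℝ)) * (1 + m ^ 2 * ε ^ 2) =
        (1 + m ^ 2 * ε ^ 2) ^ (1 - (n : ℝ)) := by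
      rw [← Real.rpow_add_one (by positivity)]
      push_cast
      ring_nf
    rw [show ((n + 1 : ℕ) : ℤ) = n + 1 by push_cast; rfl, sum_filter_snd_lt_succ,
      sum_filter_snd_norm_fcAmpBypass_sq, finsum_pathMass_succ hv hn, hK,
      finsum_pathMass_succ_self]
    linear_combination ih + hexp * (∑ᶠ x, pathMass (-Complex.I * (m * ε)) T n x n -
      ∑ p ∈ T.filter (fun p => p.2 = (n : ℤ)), pathMass (-Complex.I * (m * ε)) T n p.1 n)

lemma avoidingPaths_eq_empty
    (hhit : ∀ g : ℕ → Bool, g 0 = true → ∃ i : ℕ, (fcPosInf g i, (i : ℤ)) ∈ T)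
    (hT : ∀ p ∈ T, p.2 < (n : ℤ)) : avoidingPaths T n x b n = ∅ :=
  eq_empty_of_forall_notMem fun f hf => by
    obtain ⟨h0, -, havoid, -⟩ := mem_avoidingPaths.mp hf
    obtain ⟨i, hi⟩ := hhit (fcStep f) h0
    exact havoid i (by simpa using hT _ hi) hi

end Checker

theorem stmt11_general (m ε : ℝ) (T : Finset (ℤ × ℤ))
    (hposT : ∀ p ∈ T, 0 < p.2)
    (hhit : ∀ g : ℕ → Bool, g 0 = true → ∃ i : ℕ, (fcPosInf g i, (i : ℤ)) ∈ T) :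
    ∑ p ∈ T, ‖
        fcAmpBypass m ε (↑(T.erase p)) p.1 p.2.toNat‖ ^ 2 = 1 := by
  set N := T.sup fun p => p.2.toNat
  have hN : ∀ p ∈ T, p.2 < ((N + 1 : ℕ) : ℤ) := fun p hp => by
    have := Finset.le_sup (f := fun p => p.2.toNat) hp
    omega
  have h := Checker.sum_norm_fcAmpBypass_sq_add_finsum_pathMass m ε hposT (Nat.le_add_left 1 N)
  rwa [Finset.filter_true_of_mem hN, finsum_eq_zero_of_forall_eq_zero fun x => by
    simp [Checker.pathMass, Checker.pathAmp, Checker.avoidingPaths_eq_empty hhit hN], mul_zero,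
    add_zero] at h

/-- Generalized probability conservation law: if `T ⊂ εℤ²` is a finite set such that
every infinite checker path starting from `(0,0)` with first step to `(ε,ε)` passes
through some point of `T`, then `Σ_{(x,t)∈T} P(x,t bypass T∖{(x,t)}; m,ε) = 1`. -/
theorem stmt11 (m ε : ℝ) (hε : 0 < ε) (hm : 0 ≤ m) (T : Finset (ℤ × ℤ))
    (hposT : ∀ p ∈ T, 0 < p.2)
    (hhit : ∀ g : ℕ → Bool, g 0 = true → ∃ i : ℕ, (fcPosInf g i, (i : ℤ)) ∈ T) :
    ∑ p ∈ T, ‖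
        fcAmpBypass m ε (↑(T.erase p)) p.1 p.2.toNat‖ ^ 2 = 1 :=
  stmt11_general m ε T hposT hhit
end
end

section
/- For every ε > 0, m ≥ 0, and (x,t) ∈ εℤ² with t ≥ 2ε: (1) a₁(x,t,m,ε) = (1/√(1+m²ε²))·(a₁(x+ε,t−ε,m,ε) + mε·a₂(x+ε,t−ε,m,ε)); and (2) a₂(x,t,m,ε) = (1/√(1+m²ε²))·(a₂(x−ε,t−ε,m,ε) − mε·a₁(x−ε,t−ε,m,ε)). -/
noncomputable section

/-! Classify a checker path by its last step: those reaching `(x, t)` by an upwards-right step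
are the extensions of paths to `(x - ε, t - ε)`, and those reaching it by an upwards-left step are
the extensions of paths to `(x + ε, t - ε)`; the extension gains one turn exactly when the last two
steps differ. Since every path starts upwards-right, its number of turns is even iff it ends
upwards-right, so `(-imε)^turns` is real for such paths and purely imaginary for the others.
Hence `a₂` only sees paths ending upwards-right and `a₁` only those ending upwards-left, and the
factor `-imε` of a new turn carries the contribution of one component into the other. -/

section Paths

open Finset

variable {n k : ℕ}

theorem fcStep_snoc (g : Fin n → Bool) (b : Bool) {i : ℕ} (hi : i < n) :
    fcStep (Fin.snoc g b : Fin (n + 1) → Bool) i = fcStep g i := by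
  simp [fcStep, hi, Nat.lt_succ_of_lt hi, Fin.snoc]

theorem fcStep_snoc_self (g : Fin n → Bool) (b : Bool) :
    fcStep (Fin.snoc g b : Fin (n + 1) → Bool) n = b := by
  simp [fcStep, Fin.snoc]

theorem fcPos_snoc (g : Fin n → Bool) (b : Bool) :
    fcPos (Fin.snoc g b : Fin (n + 1) → Bool) (n + 1) = fcPos g n + if b then 1 else -1 := by
  rw [fcPos, sum_range_succ, fcStep_snoc_self, fcPos]
  congr 1
  exact sum_congr rfl fun i hi => by rw [fcStep_snoc g b (mem_range.mp hi)]

theorem even_card_filter_ne_succ_iff (s : ℕ → Bool) (l : ℕ) :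
    Even #{i ∈ range l | s i ≠ s (i + 1)} ↔ s 0 = s l := by
  induction l with
  | zero => simp
  | succ l ih =>
    rw [card_filter, sum_range_succ, ← card_filter, Nat.even_add, ih]
    cases s 0 <;> cases s l <;> cases s (l + 1) <;> simp

theorem even_fcTurns_iff (f : Fin (k + 1) → Bool) :
    Even (fcTurns f) ↔ fcStep f 0 = fcStep f k :=
  even_card_filter_ne_succ_iff (fcStep f) k

theorem fcTurns_snoc (g : Fin (k + 1) → Bool) (b : Bool) :
    fcTurns (Fin.snoc g b : Fin (k + 2) → Bool) = fcTurns g + if fcStep g k = b then 0 else 1 := by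
  simp only [fcTurns, card_filter, Nat.add_sub_cancel, sum_range_succ,
    fcStep_snoc_self, fcStep_snoc g b (Nat.lt_succ_self k)]
  congr 1
  · exact sum_congr rfl fun i hi => by
      have hi := mem_range.mp hi
      rw [fcStep_snoc g b (by omega), fcStep_snoc g b (by omega)]
  · simp only [ne_eq, ite_not]

theorem mem_fcPaths_iff {x : ℤ} {f : Fin (k + 1) → Bool} :
    f ∈ fcPaths (k + 1) x ↔ fcStep f 0 = true ∧ fcPos f (k + 1) = x := by
  simp [fcPaths, fcStep]

theorem snoc_mem_fcPaths_iff {x : ℤ} (g : Fin (k + 1) → Bool) (b : Bool) :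
    (Fin.snoc g b : Fin (k + 2) → Bool) ∈ fcPaths (k + 2) x ↔
      g ∈ fcPaths (k + 1) (x - if b then 1 else -1) := by
  rw [mem_fcPaths_iff, mem_fcPaths_iff, fcStep_snoc g b k.succ_pos, fcPos_snoc]
  constructor <;> rintro ⟨h0, hx⟩ <;> exact ⟨h0, by omega⟩

theorem sum_fcPaths_succ_succ {M : Type*} [AddCommMonoid M] (x : ℤ)
    (h : (Fin (k + 2) → Bool) → M) :
    ∑ f ∈ fcPaths (k + 2) x, h f =
      ∑ g ∈ fcPaths (k + 1) (x - 1), h (Fin.snoc g true) +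
        ∑ g ∈ fcPaths (k + 1) (x + 1), h (Fin.snoc g false) := by
  rw [← Fintype.sum_ite_mem (fcPaths (k + 2) x), ← Fintype.sum_ite_mem (fcPaths (k + 1) _),
    ← Fintype.sum_ite_mem (fcPaths (k + 1) _), ← (Fin.snocEquiv fun _ => Bool).sum_comp,
    Fintype.sum_prod_type, Fintype.sum_bool]
  congr 1 <;> refine Fintype.sum_congr _ _ fun g => ?_ <;>
    exact if_congr ((snoc_mem_fcPaths_iff g _).trans (by norm_num [sub_eq_add_neg])) rfl rfl

end Paths

section PurelyImaginary

variable {z : ℂ} {t : ℕ}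

theorem sq_eq_neg_im_sq_of_re_eq_zero (hz : z.re = 0) : z ^ 2 = ((-z.im ^ 2 : ℝ) : ℂ) := by
  apply Complex.ext <;> simp [pow_two, hz]

theorem im_pow_eq_zero_of_even (hz : z.re = 0) (ht : Even t) : (z ^ t).im = 0 := by
  obtain ⟨r, rfl⟩ := ht
  rw [← two_mul, pow_mul, sq_eq_neg_im_sq_of_re_eq_zero hz, ← Complex.ofReal_pow,
    Complex.ofReal_im]

theorem re_pow_eq_zero_of_odd (hz : z.re = 0) (ht : Odd t) : (z ^ t).re = 0 := by
  obtain ⟨r, rfl⟩ := ht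
  rw [pow_succ, pow_mul, sq_eq_neg_im_sq_of_re_eq_zero hz, ← Complex.ofReal_pow,
    Complex.re_ofReal_mul, hz, mul_zero]

end PurelyImaginary

section Amplitude

open Complex Finset

variable {k : ℕ} {g : Fin (k + 1) → Bool}

theorem even_fcTurns_snoc_iff (hg : fcStep g 0 = true) (b : Bool) :
    Even (fcTurns (Fin.snoc g b : Fin (k + 2) → Bool)) ↔ b = true := by
  rw [even_fcTurns_iff, fcStep_snoc g b k.succ_pos, fcStep_snoc_self, hg, eq_comm]

theorem re_pow_fcTurns_snoc_true (c : ℝ) (hg : fcStep g 0 = true) :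
    ((-I * c) ^ fcTurns (Fin.snoc g true : Fin (k + 2) → Bool)).re =
      ((-I * c) ^ fcTurns g).re + c * ((-I * c) ^ fcTurns g).im := by
  have hz : (-I * c).re = 0 := by simp
  have hpar := even_fcTurns_iff g
  rw [hg] at hpar
  rw [fcTurns_snoc]
  cases hk : fcStep g k
  · have ht : Odd (fcTurns g) := Nat.not_even_iff_odd.mp (by simp [hpar, hk])
    rw [if_neg (by decide), pow_succ, mul_re, re_pow_eq_zero_of_odd hz ht, hz]
    simp [mul_comm]
  · rw [if_pos rfl, add_zero, im_pow_eq_zero_of_even hz (hpar.mpr hk.symm), mul_zero, add_zero]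

theorem im_pow_fcTurns_snoc_false (c : ℝ) (hg : fcStep g 0 = true) :
    ((-I * c) ^ fcTurns (Fin.snoc g false : Fin (k + 2) → Bool)).im =
      ((-I * c) ^ fcTurns g).im - c * ((-I * c) ^ fcTurns g).re := by
  have hz : (-I * c).re = 0 := by simp
  have hpar := even_fcTurns_iff g
  rw [hg] at hpar
  rw [fcTurns_snoc]
  cases hk : fcStep g k
  · have ht : Odd (fcTurns g) := Nat.not_even_iff_odd.mp (by simp [hpar, hk])
    rw [if_pos rfl, add_zero, re_pow_eq_zero_of_odd hz ht, mul_zero, sub_zero]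
  · rw [if_neg (by decide), pow_succ, mul_im, im_pow_eq_zero_of_even hz (hpar.mpr hk.symm),
      hz]
    simp [mul_comm]

theorem re_sum_fcPaths_succ_succ (c : ℝ) (x : ℤ) :
    (∑ f ∈ fcPaths (k + 2) x, (-I * c) ^ fcTurns f).re =
      (∑ g ∈ fcPaths (k + 1) (x - 1), (-I * c) ^ fcTurns g).re +
        c * (∑ g ∈ fcPaths (k + 1) (x - 1), (-I * c) ^ fcTurns g).im := by
  have hz : (-I * c).re = 0 := by simp
  have hodd : ∀ g ∈ fcPaths (k + 1) (x + 1),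
      ((-I * c) ^ fcTurns (Fin.snoc g false : Fin (k + 2) → Bool)).re = 0 := fun g hg =>
    re_pow_eq_zero_of_odd hz <| Nat.not_even_iff_odd.mp <| by
      rw [even_fcTurns_snoc_iff (mem_fcPaths_iff.mp hg).1]
      decide
  rw [sum_fcPaths_succ_succ, add_re, re_sum, re_sum, re_sum, im_sum, mul_sum,
    ← sum_add_distrib, sum_eq_zero hodd, add_zero]
  exact sum_congr rfl fun g hg => re_pow_fcTurns_snoc_true c (mem_fcPaths_iff.mp hg).1

theorem im_sum_fcPaths_succ_succ (c : ℝ) (x : ℤ) :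
    (∑ f ∈ fcPaths (k + 2) x, (-I * c) ^ fcTurns f).im =
      (∑ g ∈ fcPaths (k + 1) (x + 1), (-I * c) ^ fcTurns g).im -
        c * (∑ g ∈ fcPaths (k + 1) (x + 1), (-I * c) ^ fcTurns g).re := by
  have hz : (-I * c).re = 0 := by simp
  have heven : ∀ g ∈ fcPaths (k + 1) (x - 1),
      ((-I * c) ^ fcTurns (Fin.snoc g true : Fin (k + 2) → Bool)).im = 0 := fun g hg =>
    im_pow_eq_zero_of_even hz <| (even_fcTurns_snoc_iff (mem_fcPaths_iff.mp hg).1 true).mpr rfl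
  rw [sum_fcPaths_succ_succ, add_im, im_sum, im_sum, im_sum, re_sum, mul_sum,
    ← sum_sub_distrib, sum_eq_zero heven, zero_add]
  exact sum_congr rfl fun g hg => im_pow_fcTurns_snoc_false c (mem_fcPaths_iff.mp hg).1

theorem fcAmp_re (m ε : ℝ) (x : ℤ) (n : ℕ) :
    (fcAmp m ε x n).re = -(1 + m ^ 2 * ε ^ 2) ^ ((1 - (n : ℝ)) / 2) *
      (∑ f ∈ fcPaths n x, (-I * (m * ε : ℝ)) ^ fcTurns f).im := by
  simp [fcAmp, mul_re]

theorem fcAmp_im (m ε : ℝ) (x : ℤ) (n : ℕ) :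
    (fcAmp m ε x n).im = (1 + m ^ 2 * ε ^ 2) ^ ((1 - (n : ℝ)) / 2) *
      (∑ f ∈ fcPaths n x, (-I * (m * ε : ℝ)) ^ fcTurns f).re := by
  simp [fcAmp, mul_im]

end Amplitude

theorem stmt13_general (m ε : ℝ) (X : ℤ) (n : ℕ) (hn : 2 ≤ n) :
    (fcAmp m ε X n).re
        = (1 / Real.sqrt (1 + m ^ 2 * ε ^ 2)) *
            ((fcAmp m ε (X + 1) (n - 1)).re + m * ε * (fcAmp m ε (X + 1) (n - 1)).im) ∧
    (fcAmp m ε X n).im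
        = (1 / Real.sqrt (1 + m ^ 2 * ε ^ 2)) *
            ((fcAmp m ε (X - 1) (n - 1)).im - m * ε * (fcAmp m ε (X - 1) (n - 1)).re)
    := by
  obtain ⟨k, rfl⟩ : ∃ k, n = k + 2 := ⟨n - 2, by omega⟩
  have hA : 0 < 1 + m ^ 2 * ε ^ 2 := by positivity
  have hnorm : (1 + m ^ 2 * ε ^ 2) ^ ((1 - ((k + 2 : ℕ) : ℝ)) / 2) =
      (1 + m ^ 2 * ε ^ 2) ^ ((1 - ((k + 1 : ℕ) : ℝ)) / 2) / √(1 + m ^ 2 * ε ^ 2) := by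
    rw [Real.sqrt_eq_rpow, ← Real.rpow_sub hA]
    push_cast
    ring_nf
  rw [show k + 2 - 1 = k + 1 from rfl, fcAmp_re, fcAmp_im, fcAmp_re, fcAmp_im, fcAmp_re, fcAmp_im,
    re_sum_fcPaths_succ_succ, im_sum_fcPaths_succ_succ, hnorm]
  constructor <;> field_simp <;> ring

/-- Dirac equation: for a lattice point `(x,t) = (εX, εn)` with `t ≥ 2ε`. -/
theorem stmt13 (m ε : ℝ) (hε : 0 < ε) (hm : 0 ≤ m) (X : ℤ) (n : ℕ) (hn : 2 ≤ n) :
    (fcAmp m ε X n).re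
        = (1 / Real.sqrt (1 + m ^ 2 * ε ^ 2)) *
            ((fcAmp m ε (X + 1) (n - 1)).re + m * ε * (fcAmp m ε (X + 1) (n - 1)).im) ∧
    (fcAmp m ε X n).im
        = (1 / Real.sqrt (1 + m ^ 2 * ε ^ 2)) *
            ((fcAmp m ε (X - 1) (n - 1)).im - m * ε * (fcAmp m ε (X - 1) (n - 1)).re) :=
  stmt13_general m ε X n hn
end
end
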